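/- Let p and q be two distinct processes. Starting from any configuration, under Hypothesis 1, if Request_p = In and State_p[q] < 4 hold, then State_p[q] is eventually incremented: there is no execution suffix in which Request_p = In and State_p[q] = i < 4 hold forever. -/
import Mathlib


/-!
A formal model of Protocol PIF (Algorithm 1) in a fully-connected
message-passing system with unreliable, fair, single-message-capacity
channels.  Processes are `Fin n`; broadcast/feedback data range over `D`.

Every configuration is a possible initial configuration; an execution is an
infinite sequence of atomic steps, each step being an external request
(`env`), an external setting of a feedback message (`setF`), one of the
actions `A1`, `A2`, `A3` of Protocol PIF, or the loss of a message in
transit.  Fairness of channels and weak fairness of enabled protocol actions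
are part of the notion of execution.
-/

set_option autoImplicit false

namespace PIF

inductive Req where
  | Wait | In | Done
deriving DecidableEq

/-- A `⟨PIF, B, F, qState, pState⟩` message: the broadcast data, the feedback
data, the sender's `State[receiver]`, and the sender's `NeigState[receiver]`. -/
structure Msg (D : Type*) where
  b : D
  f : D
  sSt : Fin 5
  sNg : Fin 5

/-- A configuration: the variables of each process together with the contents
of every channel (single-message capacity, hence `Option`).
`chan p q` is the channel from `p` to `q`. -/
structure Cfg (n : ℕ) (D : Type*) where
  req : Fin n → Req
  bmes : Fin n → D
  fmes : Fin n → Fin n → D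
  st : Fin n → Fin n → Fin 5
  ng : Fin n → Fin n → Fin 5
  chan : Fin n → Fin n → Option (Msg D)

inductive Act (n : ℕ) (D : Type*) where
  /-- external request to broadcast `b`: `Request p := Wait`, `B-Mes p := b` -/
  | env (p : Fin n) (b : D)
  /-- the application externally sets the feedback message `F-Mes p [q] := f` -/
  | setF (p q : Fin n) (f : D)
  /-- action `A1` of process `p` (the starting action) -/
  | a1 (p : Fin n)
  /-- action `A2` of process `p` (decision or (re)sending) -/
  | a2 (p : Fin n)
  /-- action `A3`: process `p` receives message `m` from process `q` -/
  | a3 (p q : Fin n) (m : Msg D)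
  /-- the message in transit from `p` to `q` is lost -/
  | lose (p q : Fin n)

variable {n : ℕ} {D : Type*}

def upd2 {β : Type*} (f : Fin n → Fin n → β) (p q : Fin n) (v : β) :
    Fin n → Fin n → β :=
  fun a b => if a = p ∧ b = q then v else f a b

/-- Sending into a single-capacity unreliable channel: if the channel is full
the message is lost; if it is empty, the message is put in the channel or
lost. -/
def send (old : Option (Msg D)) (m : Msg D) (new : Option (Msg D)) : Prop :=
  (old ≠ none ∧ new = old) ∨ (old = none ∧ (new = some m ∨ new = none))

/-- The semantics of one atomic step `γ —A→ γ'`. -/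
def StepAt (γ : Cfg n D) : Act n D → Cfg n D → Prop
  | .env p b, γ' =>
      γ' = { γ with req := Function.update γ.req p .Wait,
                    bmes := Function.update γ.bmes p b }
  | .setF p q f, γ' =>
      γ' = { γ with fmes := upd2 γ.fmes p q f }
  | .a1 p, γ' =>
      γ.req p = .Wait ∧
      γ' = { γ with req := Function.update γ.req p .In,
                    st := Function.update γ.st p (fun _ => 0) }
  | .a2 p, γ' =>
      γ.req p = .In ∧
      (((∀ q, q ≠ p → γ.st p q = 4) ∧
          γ' = { γ with req := Function.update γ.req p .Done }) ∨
       ((¬ ∀ q, q ≠ p → γ.st p q = 4) ∧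
          γ'.req = γ.req ∧ γ'.bmes = γ.bmes ∧ γ'.fmes = γ.fmes ∧
          γ'.st = γ.st ∧ γ'.ng = γ.ng ∧
          (∀ q, q ≠ p → γ.st p q ≠ 4 →
            send (γ.chan p q) ⟨γ.bmes p, γ.fmes p q, γ.st p q, γ.ng p q⟩
              (γ'.chan p q)) ∧
          (∀ a b, ¬ (a = p ∧ b ≠ p ∧ γ.st p b ≠ 4) → γ'.chan a b = γ.chan a b)))
  | .a3 p q m, γ' =>
      q ≠ p ∧ γ.chan q p = some m ∧
      (let st' : Fin 5 :=
        if γ.st p q = m.sNg ∧ (γ.st p q : ℕ) < 4 then γ.st p q + 1 else γ.st p q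
       γ'.req = γ.req ∧ γ'.bmes = γ.bmes ∧ γ'.fmes = γ.fmes ∧
       γ'.st = upd2 γ.st p q st' ∧
       γ'.ng = upd2 γ.ng p q m.sSt ∧
       γ'.chan q p = none ∧
       (((m.sSt : ℕ) < 4 ∧
           send (γ.chan p q) ⟨γ.bmes p, γ.fmes p q, st', m.sSt⟩ (γ'.chan p q)) ∨
        (¬ (m.sSt : ℕ) < 4 ∧ γ'.chan p q = γ.chan p q)) ∧
       (∀ a b, ¬ (a = q ∧ b = p) → ¬ (a = p ∧ b = q) →
          γ'.chan a b = γ.chan a b))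
  | .lose p q, γ' =>
      (∃ m, γ.chan p q = some m) ∧
      γ'.req = γ.req ∧ γ'.bmes = γ.bmes ∧ γ'.fmes = γ.fmes ∧
      γ'.st = γ.st ∧ γ'.ng = γ.ng ∧
      γ'.chan p q = none ∧
      (∀ a b, ¬ (a = p ∧ b = q) → γ'.chan a b = γ.chan a b)

/-- A `receive-brd⟨B⟩ from q` event is generated at `p` in step `γ —A→ ·`. -/
def brdEvent (γ : Cfg n D) (A : Act n D) (p q : Fin n) (B : D) : Prop :=
  ∃ m : Msg D, A = .a3 p q m ∧ m.b = B ∧ γ.ng p q ≠ 3 ∧ m.sSt = 3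

/-- A `receive-fck⟨F⟩ from q` event is generated at `p` in step `γ —A→ ·`
(i.e. `State p [q]` switches from 3 to 4). -/
def fckEvent (γ : Cfg n D) (A : Act n D) (p q : Fin n) (F : D) : Prop :=
  ∃ m : Msg D, A = .a3 p q m ∧ m.f = F ∧ γ.st p q = 3 ∧ m.sNg = 3

def Enabled (γ : Cfg n D) (A : Act n D) : Prop := ∃ γ', StepAt γ A γ'

/-- The actions of the protocol proper (weak fairness applies to these). -/
def ProcAct : Act n D → Prop
  | .a1 _ => True
  | .a2 _ => True
  | .a3 _ _ _ => True
  | _ => False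

/-- Step `i` attempts to send a message from `p` to `q`. -/
def SendAttempt (γ : ℕ → Cfg n D) (act : ℕ → Act n D) (i : ℕ)
    (p q : Fin n) : Prop :=
  (act i = .a2 p ∧ (γ i).req p = .In ∧ q ≠ p ∧ (γ i).st p q ≠ 4 ∧
     ¬ ∀ r, r ≠ p → (γ i).st p r = 4) ∨
  (∃ m : Msg D, act i = .a3 p q m ∧ (m.sSt : ℕ) < 4)

/-- An execution: an infinite sequence of valid atomic steps starting from an
arbitrary configuration, in which (weak fairness) every protocol action that
is continuously enabled is eventually executed, and (channel fairness) if
infinitely many messages are sent from `p` to `q` then `q` receives a message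
from `p` infinitely often. -/
structure Exec (n : ℕ) (D : Type*) where
  γ : ℕ → Cfg n D
  act : ℕ → Act n D
  valid : ∀ i, StepAt (γ i) (act i) (γ (i + 1))
  wf : ∀ A : Act n D, ProcAct A →
        (∃ i, ∀ j, i ≤ j → Enabled (γ j) A) → ∀ i, ∃ j, i ≤ j ∧ act j = A
  chanFair : ∀ p q : Fin n, p ≠ q →
        (∀ i, ∃ j, i ≤ j ∧ SendAttempt γ act j p q) →
        ∀ i, ∃ j, i ≤ j ∧ ∃ m : Msg D, act j = .a3 q p m

/-- Hypothesis 1: while `Request p ≠ Done`, `Request p` is not externally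
set to `Wait`. -/
def Hyp1 (e : Exec n D) : Prop :=
  ∀ i p b, e.act i = .env p b → (e.γ i).req p = .Done

end PIF

namespace PIF

/-- Let `p` and `q` be two distinct processes.  Starting
from any configuration, under Hypothesis 1, if `Request p = In` and
`State p [q] < 4`, then `State p [q]` is eventually incremented: there is no
execution suffix in which `Request p = In` and `State p [q] = i < 4` hold
forever. -/
theorem pif_state_eventually_incremented {n : ℕ} {D : Type*}
    (e : Exec n D) (h1 : Hyp1 e) (p q : Fin n) (hpq : p ≠ q) (i : ℕ)
    (hreq : (e.γ i).req p = .In) (hst : ((e.γ i).st p q : ℕ) < 4) :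
    ∃ j, i ≤ j ∧ ((e.γ j).st p q : ℕ) < 4 ∧
      (e.γ (j + 1)).st p q = (e.γ j).st p q + 1 := by
  by_contra Hc
  push_neg at Hc
  -- `Hc : ∀ j, i ≤ j → st < 4 → no increment at step j`
  set v := (e.γ i).st p q with hvdef
  have hv4 : v ≠ 4 := by
    intro h
    rw [h] at hst
    have h4 : ((4 : Fin 5) : ℕ) = 4 := rfl
    omega
  have hqp : q ≠ p := Ne.symm hpq
  -- Step 1: stability of `req p = In` and `st p q = v` from time `i` on.
  have stable : ∀ j, i ≤ j → (e.γ j).req p = .In ∧ (e.γ j).st p q = v := by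
    intro j hj
    induction j, hj using Nat.le_induction with
    | base => exact ⟨hreq, rfl⟩
    | succ j hj IH =>
      obtain ⟨hr, hs⟩ := IH
      have hv := e.valid j
      cases hA : e.act j with
      | env p' b =>
        rw [hA] at hv; simp only [StepAt] at hv
        have hp' : p ≠ p' := by
          intro h
          have hd := h1 j p' b hA
          rw [← h, hr] at hd
          exact absurd hd (by decide)
        rw [hv]
        refine ⟨?_, hs⟩
        show Function.update (e.γ j).req p' Req.Wait p = Req.In
        rw [Function.update_of_ne hp']; exact hr
      | setF p' q' f =>
        rw [hA] at hv; simp only [StepAt] at hv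
        rw [hv]; exact ⟨hr, hs⟩
      | a1 p' =>
        rw [hA] at hv; simp only [StepAt] at hv
        obtain ⟨hw, hv⟩ := hv
        have hp' : p ≠ p' := by
          intro h; rw [← h, hr] at hw; exact absurd hw (by decide)
        rw [hv]
        constructor
        · show Function.update (e.γ j).req p' Req.In p = Req.In
          rw [Function.update_of_ne hp']; exact hr
        · show Function.update (e.γ j).st p' (fun _ => 0) p q = v
          rw [Function.update_of_ne hp']; exact hs
      | a2 p' =>
        rw [hA] at hv; simp only [StepAt] at hv
        obtain ⟨hrp', hv | hv⟩ := hv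
        · obtain ⟨hall, hv⟩ := hv
          have hp' : p ≠ p' := by
            intro h
            have := hall q (h ▸ hqp)
            rw [← h, hs] at this
            exact hv4 this
          rw [hv]
          refine ⟨?_, hs⟩
          show Function.update (e.γ j).req p' Req.Done p = Req.In
          rw [Function.update_of_ne hp']; exact hr
        · obtain ⟨_, hre, _, _, hste, _⟩ := hv
          rw [hre, hste]; exact ⟨hr, hs⟩
      | a3 p' q' m =>
        rw [hA] at hv; simp only [StepAt] at hv
        obtain ⟨hq'p', hchan, hre, _, _, hste, _⟩ := hv
        refine ⟨by rw [hre]; exact hr, ?_⟩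
        rw [hste]
        simp only [upd2]
        by_cases hc : p = p' ∧ q = q'
        · rw [if_pos hc]
          obtain ⟨hc1, hc2⟩ := hc
          subst hc1; subst hc2
          by_cases hinc : (e.γ j).st p q = m.sNg ∧ ((e.γ j).st p q : ℕ) < 4
          · exfalso
            apply Hc j hj (by rw [hs]; exact hst)
            rw [hste]
            simp only [upd2]
            rw [if_pos hinc]; simp
          · rw [if_neg hinc]; exact hs
        · rw [if_neg hc]; exact hs
      | lose p' q' =>
        rw [hA] at hv; simp only [StepAt] at hv
        obtain ⟨_, hre, _, _, hste, _⟩ := hv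
        rw [hre, hste]; exact ⟨hr, hs⟩
  -- Step 2: `a2 p` is continuously enabled, hence executed infinitely often.
  have hen : ∀ j, i ≤ j → Enabled (e.γ j) (Act.a2 p) := by
    intro j hj
    have hnall : ¬ ∀ r, r ≠ p → (e.γ j).st p r = 4 := fun hall =>
      hv4 (by rw [← (stable j hj).2]; exact hall q hqp)
    have hsend : ∀ r, r ≠ p → (e.γ j).st p r ≠ 4 →
        send ((e.γ j).chan p r)
          ⟨(e.γ j).bmes p, (e.γ j).fmes p r, (e.γ j).st p r, (e.γ j).ng p r⟩
          ((e.γ j).chan p r) := by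
      intro r _ _
      by_cases hc : (e.γ j).chan p r = none
      · exact Or.inr ⟨hc, Or.inr hc⟩
      · exact Or.inl ⟨hc, rfl⟩
    exact ⟨e.γ j, (stable j hj).1,
      Or.inr ⟨hnall, rfl, rfl, rfl, rfl, rfl, hsend, fun a b _ => rfl⟩⟩
  have ha2inf : ∀ k, ∃ j, k ≤ j ∧ e.act j = .a2 p := by
    intro k
    exact e.wf (.a2 p) trivial ⟨i, fun j hj => hen j hj⟩ k
  have hstne : ∀ j, i ≤ j → (e.γ j).st p q ≠ 4 := by
    intro j hj h
    rw [(stable j hj).2] at h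
    exact hv4 h
  have hsendpq : ∀ k, ∃ j, k ≤ j ∧ SendAttempt e.γ e.act j p q := by
    intro k
    obtain ⟨j, hj, hact⟩ := ha2inf (max i k)
    have hij : i ≤ j := le_trans (le_max_left _ _) hj
    refine ⟨j, le_trans (le_max_right _ _) hj, Or.inl ⟨hact, (stable j hij).1, hqp,
      hstne j hij, ?_⟩⟩
    intro hall
    exact hstne j hij (hall q hqp)
  have hrecvq : ∀ k, ∃ j, k ≤ j ∧ ∃ m : Msg D, e.act j = .a3 q p m :=
    e.chanFair p q hpq hsendpq
  -- Step 3: the first reception by `q` clears the channel `p → q`;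
  -- afterwards every message in it carries `sSt = v`.
  obtain ⟨j1, hj1, m1, hm1⟩ := hrecvq i
  have hP0 : (e.γ (j1 + 1)).chan p q = none := by
    have hv := e.valid j1
    rw [hm1] at hv; simp only [StepAt] at hv
    exact hv.2.2.2.2.2.2.2.1
  have hP : ∀ j, j1 + 1 ≤ j → ∀ m', (e.γ j).chan p q = some m' → m'.sSt = v := by
    intro j hj
    induction j, hj using Nat.le_induction with
    | base => intro m' hm'; rw [hP0] at hm'; simp at hm'
    | succ j hj IH =>
      have hij : i ≤ j := by omega
      have hv := e.valid j
      intro m' hm'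
      cases hA : e.act j with
      | env p' b =>
        rw [hA] at hv; simp only [StepAt] at hv
        rw [hv] at hm'; exact IH m' hm'
      | setF p' q' f =>
        rw [hA] at hv; simp only [StepAt] at hv
        rw [hv] at hm'; exact IH m' hm'
      | a1 p' =>
        rw [hA] at hv; simp only [StepAt] at hv
        rw [hv.2] at hm'; exact IH m' hm'
      | a2 p' =>
        rw [hA] at hv; simp only [StepAt] at hv
        obtain ⟨hrp', hv | hv⟩ := hv
        · rw [hv.2] at hm'; exact IH m' hm'
        · obtain ⟨hnall, _, _, _, _, _, hsend, hoth⟩ := hv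
          by_cases hc : p = p' ∧ q ≠ p' ∧ (e.γ j).st p' q ≠ 4
          · obtain ⟨hc1, hc2, hc3⟩ := hc
            subst hc1
            rcases hsend q hc2 hc3 with ⟨_, heq⟩ | ⟨_, heq | heq⟩
            · rw [heq] at hm'; exact IH m' hm'
            · rw [heq] at hm'
              have hee := Option.some.inj hm'
              rw [← hee]
              show (e.γ j).st p q = v
              exact (stable j hij).2
            · rw [heq] at hm'; simp at hm'
          · rw [hoth p q hc] at hm'; exact IH m' hm'
      | a3 p' q' m'' =>
        rw [hA] at hv; simp only [StepAt] at hv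
        obtain ⟨hne, hcs, _, _, _, hste, _, hnone, hor, hoth⟩ := hv
        by_cases hc1 : q = p' ∧ p = q'
        · obtain ⟨h1', h2'⟩ := hc1; subst h1'; subst h2'
          rw [hnone] at hm'; simp at hm'
        · by_cases hc2 : p = p' ∧ q = q'
          · obtain ⟨h1', h2'⟩ := hc2; subst h1'; subst h2'
            rcases hor with ⟨_, hsd⟩ | ⟨_, heq⟩
            · rcases hsd with ⟨_, heq⟩ | ⟨_, heq | heq⟩
              · rw [heq] at hm'; exact IH m' hm'
              · rw [heq] at hm'
                have hee := Option.some.inj hm'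
                rw [← hee]
                show (if (e.γ j).st p q = m''.sNg ∧ ((e.γ j).st p q : ℕ) < 4
                      then (e.γ j).st p q + 1 else (e.γ j).st p q) = v
                by_cases hcc : (e.γ j).st p q = m''.sNg ∧ ((e.γ j).st p q : ℕ) < 4
                · exfalso
                  apply Hc j hij hcc.2
                  rw [hste]
                  simp only [upd2]
                  rw [if_pos hcc]; simp
                · rw [if_neg hcc]; exact (stable j hij).2
              · rw [heq] at hm'; simp at hm'
            · rw [heq] at hm'; exact IH m' hm'
          · rw [hoth p q (fun h => hc1 ⟨h.2, h.1⟩) hc2] at hm'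
            exact IH m' hm'
      | lose p' q' =>
        rw [hA] at hv; simp only [StepAt] at hv
        obtain ⟨_, _, _, _, _, _, hnone, hoth⟩ := hv
        by_cases hc : p = p' ∧ q = q'
        · obtain ⟨h1', h2'⟩ := hc; subst h1'; subst h2'
          rw [hnone] at hm'; simp at hm'
        · rw [hoth p q hc] at hm'
          exact IH m' hm'
  -- Step 4: hence `q` keeps sending to `p`, so `p` receives infinitely often.
  have hsendqp : ∀ k, ∃ j, k ≤ j ∧ SendAttempt e.γ e.act j q p := by
    intro k
    obtain ⟨j, hj, m', hm'⟩ := hrecvq (max k (j1 + 1))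
    have hj1j : j1 + 1 ≤ j := le_trans (le_max_right _ _) hj
    have hv := e.valid j
    rw [hm'] at hv; simp only [StepAt] at hv
    have hcs : (e.γ j).chan p q = some m' := hv.2.1
    have hs' : m'.sSt = v := hP j hj1j m' hcs
    refine ⟨j, le_trans (le_max_left _ _) hj, Or.inr ⟨m', hm', ?_⟩⟩
    rw [hs']; exact hst
  have hrecvp : ∀ k, ∃ j, k ≤ j ∧ ∃ m : Msg D, e.act j = .a3 p q m :=
    e.chanFair q p hqp hsendqp
  -- Step 5: after the first reception of a `v`-message by `q`,
  -- `NeigState q [p] = v` forever.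
  obtain ⟨j2, hj2, m2, hm2⟩ := hrecvq (j1 + 1)
  have hNg0 : (e.γ (j2 + 1)).ng q p = v := by
    have hv := e.valid j2
    rw [hm2] at hv; simp only [StepAt] at hv
    obtain ⟨_, hcs, _, _, _, _, hng, _⟩ := hv
    rw [hng]
    simpa [upd2] using hP j2 hj2 m2 hcs
  have hNg : ∀ j, j2 + 1 ≤ j → (e.γ j).ng q p = v := by
    intro j hj
    induction j, hj using Nat.le_induction with
    | base => exact hNg0
    | succ j hj IH =>
      have hv := e.valid j
      cases hA : e.act j with
      | env p' b =>
        rw [hA] at hv; simp only [StepAt] at hv; rw [hv]; exact IH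
      | setF p' q' f =>
        rw [hA] at hv; simp only [StepAt] at hv; rw [hv]; exact IH
      | a1 p' =>
        rw [hA] at hv; simp only [StepAt] at hv; rw [hv.2]; exact IH
      | a2 p' =>
        rw [hA] at hv; simp only [StepAt] at hv
        obtain ⟨_, hv | hv⟩ := hv
        · rw [hv.2]; exact IH
        · rw [hv.2.2.2.2.2.1]; exact IH
      | a3 p' q' m'' =>
        rw [hA] at hv; simp only [StepAt] at hv
        obtain ⟨_, hcs, _, _, _, _, hng, _⟩ := hv
        rw [hng]
        simp only [upd2]
        by_cases hc : q = p' ∧ p = q'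
        · obtain ⟨h1', h2'⟩ := hc; subst h1'; subst h2'
          rw [if_pos ⟨rfl, rfl⟩]
          exact hP j (by omega) m'' hcs
        · rw [if_neg hc]; exact IH
      | lose p' q' =>
        rw [hA] at hv; simp only [StepAt] at hv
        rw [hv.2.2.2.2.2.1]; exact IH
  -- Step 6: after the first reception by `p` past that point, every message
  -- in the channel `q → p` carries `sNg = v`.
  obtain ⟨j3, hj3, m3, hm3⟩ := hrecvp (j2 + 1)
  have hQ0 : (e.γ (j3 + 1)).chan q p = none := by
    have hv := e.valid j3
    rw [hm3] at hv; simp only [StepAt] at hv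
    exact hv.2.2.2.2.2.2.2.1
  have hQ : ∀ j, j3 + 1 ≤ j → ∀ m', (e.γ j).chan q p = some m' → m'.sNg = v := by
    intro j hj
    induction j, hj using Nat.le_induction with
    | base => intro m' hm'; rw [hQ0] at hm'; simp at hm'
    | succ j hj IH =>
      have hij2 : j2 + 1 ≤ j := by omega
      have hij1 : j1 + 1 ≤ j := by omega
      have hv := e.valid j
      intro m' hm'
      cases hA : e.act j with
      | env p' b =>
        rw [hA] at hv; simp only [StepAt] at hv
        rw [hv] at hm'; exact IH m' hm'
      | setF p' q' f =>
        rw [hA] at hv; simp only [StepAt] at hv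
        rw [hv] at hm'; exact IH m' hm'
      | a1 p' =>
        rw [hA] at hv; simp only [StepAt] at hv
        rw [hv.2] at hm'; exact IH m' hm'
      | a2 p' =>
        rw [hA] at hv; simp only [StepAt] at hv
        obtain ⟨_, hv | hv⟩ := hv
        · rw [hv.2] at hm'; exact IH m' hm'
        · obtain ⟨_, _, _, _, _, _, hsend, hoth⟩ := hv
          by_cases hc : q = p' ∧ p ≠ p' ∧ (e.γ j).st p' p ≠ 4
          · obtain ⟨hc1, hc2, hc3⟩ := hc
            subst hc1
            rcases hsend p hc2 hc3 with ⟨_, heq⟩ | ⟨_, heq | heq⟩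
            · rw [heq] at hm'; exact IH m' hm'
            · rw [heq] at hm'
              have hee := Option.some.inj hm'
              rw [← hee]
              show (e.γ j).ng q p = v
              exact hNg j hij2
            · rw [heq] at hm'; simp at hm'
          · rw [hoth q p hc] at hm'; exact IH m' hm'
      | a3 p' q' m'' =>
        rw [hA] at hv; simp only [StepAt] at hv
        obtain ⟨_, hcs, _, _, _, _, _, hnone, hor, hoth⟩ := hv
        by_cases hc1 : p = p' ∧ q = q'
        · obtain ⟨h1', h2'⟩ := hc1; subst h1'; subst h2'
          rw [hnone] at hm'; simp at hm'
        · by_cases hc2 : q = p' ∧ p = q'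
          · obtain ⟨h1', h2'⟩ := hc2; subst h1'; subst h2'
            have hsSt : m''.sSt = v := hP j hij1 m'' hcs
            rcases hor with ⟨_, hsd⟩ | ⟨_, heq⟩
            · rcases hsd with ⟨_, heq⟩ | ⟨_, heq | heq⟩
              · rw [heq] at hm'; exact IH m' hm'
              · rw [heq] at hm'
                have hee := Option.some.inj hm'
                rw [← hee]
                show m''.sSt = v
                exact hsSt
              · rw [heq] at hm'; simp at hm'
            · rw [heq] at hm'; exact IH m' hm'
          · rw [hoth q p (fun h => hc1 ⟨h.2, h.1⟩) hc2] at hm'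
            exact IH m' hm'
      | lose p' q' =>
        rw [hA] at hv; simp only [StepAt] at hv
        obtain ⟨_, _, _, _, _, _, hnone, hoth⟩ := hv
        by_cases hc : q = p' ∧ p = q'
        · obtain ⟨h1', h2'⟩ := hc; subst h1'; subst h2'
          rw [hnone] at hm'; simp at hm'
        · rw [hoth q p hc] at hm'
          exact IH m' hm'
  -- Step 7: `p` eventually receives a message with `sNg = v = st p q`,
  -- forcing the increment: contradiction.
  obtain ⟨j4, hj4, m4, hm4⟩ := hrecvp (j3 + 1)
  have hij : i ≤ j4 := by omega
  have hv := e.valid j4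
  rw [hm4] at hv; simp only [StepAt] at hv
  obtain ⟨_, hcs, _, _, _, hste, _⟩ := hv
  have hsNg : m4.sNg = v := hQ j4 hj4 m4 hcs
  have hcond : (e.γ j4).st p q = m4.sNg ∧ ((e.γ j4).st p q : ℕ) < 4 := by
    refine ⟨?_, ?_⟩
    · rw [(stable j4 hij).2, hsNg]
    · rw [(stable j4 hij).2]; exact hst
  apply Hc j4 hij hcond.2
  rw [hste]
  simp only [upd2]
  rw [if_pos hcond]; simp



end PIF
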